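/- arXiv:1404.4949 — 4 statements merged into one kernel-verified Lean document; each statement's English description precedes it below -/
import Mathlib

section
/- Let m, n, N be positive integers and let q, q(1), …, q(N) ∈ [1,∞)^m be such that the vector (1/q_1, …, 1/q_m) lies in the convex hull of the vectors (1/q_1(k), …, 1/q_m(k)), k = 1, …, N, with convex coefficients θ_1, …, θ_N. Then for every scalar matrix a = (a_i)_{i ∈ {1,…,n}^m}, the mixed norm satisfies ‖a‖_q ≤ ∏_{k=1}^N ‖a‖_{q(k)}^{θ_k}. -/
/-!
Induct on the number `m` of indices. Fixing the first index `j`, the induction hypothesis bounds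
the inner norm of the slice `a(j, ·)` in exponent `q` by the product over `k` of its inner norms in
exponent `q(k)`, raised to `θ_k`. Taking the outer `ℓ_{q_1}` norm of such a product is the
generalized Hölder inequality with weights `θ_k q_1 / q_1(k)`, which sum to `1` precisely because
`1/q_1 = ∑_k θ_k / q_1(k)`.
-/

open Finset

/-- The mixed `ℓ_{p_1}(ℓ_{p_2}(⋯ℓ_{p_m}))` norm of a scalar matrix
`a = (a_i)_{i ∈ {1,…,n}^m}`. -/
noncomputable def mixedNorm (n : ℕ) : (m : ℕ) → (Fin m → ℝ) → ((Fin m → Fin n) → ℂ) → ℝ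
  | 0, _, a => ‖a (fun i => i.elim0)‖
  | m + 1, p, a =>
      (∑ j : Fin n,
        (mixedNorm n m (fun i => p i.succ) (fun f => a (Fin.cons j f))) ^ p 0) ^ (1 / p 0)

open MeasureTheory

theorem Real.sum_prod_rpow_le_prod_sum_rpow {ι κ : Type*} [Fintype ι] (s : Finset κ)
    {w : κ → ℝ} (f : κ → ι → ℝ) (hw : ∀ k ∈ s, 0 ≤ w k) (hw1 : ∑ k ∈ s, w k = 1)
    (hf : ∀ k ∈ s, ∀ j, 0 ≤ f k j) :
    ∑ j, ∏ k ∈ s, f k j ^ w k ≤ ∏ k ∈ s, (∑ j, f k j) ^ w k := by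
  let _ : MeasurableSpace ι := ⊤
  have hsum (g : ι → ENNReal) : ∫⁻ j, g j ∂Measure.count = ∑ j, g j := by
    simp [lintegral_fintype]
  have holder := ENNReal.lintegral_prod_norm_pow_le (μ := Measure.count) s
    (f := fun k j => ENNReal.ofReal (f k j)) (fun _ _ => measurable_from_top.aemeasurable) hw1 hw
  simp only [hsum] at holder
  have hS : ∀ k ∈ s, 0 ≤ ∑ j, f k j := fun k hk => sum_nonneg fun j _ => hf k hk j
  rw [← ENNReal.ofReal_le_ofReal_iff (prod_nonneg fun k hk => Real.rpow_nonneg (hS k hk) _),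
    ENNReal.ofReal_sum_of_nonneg fun j _ => prod_nonneg fun k hk => Real.rpow_nonneg (hf k hk j) _,
    ENNReal.ofReal_prod_of_nonneg fun k hk => Real.rpow_nonneg (hS k hk) _]
  convert holder using 2 with j _ k hk
  · rw [ENNReal.ofReal_prod_of_nonneg fun k hk => Real.rpow_nonneg (hf k hk j) _]
    exact prod_congr rfl fun k hk => (ENNReal.ofReal_rpow_of_nonneg (hf k hk j) (hw k hk)).symm
  · rw [← ENNReal.ofReal_rpow_of_nonneg (hS k hk) (hw k hk),
      ENNReal.ofReal_sum_of_nonneg fun j _ => hf k hk j]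
theorem sum_rpow_one_div_le_prod_of_le_prod_rpow {ι κ : Type*} [Fintype ι] (s : Finset κ)
    {p : ℝ} {P θ : κ → ℝ} (hp : 0 < p) (hP : ∀ k ∈ s, 0 < P k) (hθ : ∀ k ∈ s, 0 ≤ θ k)
    (hconv : 1 / p = ∑ k ∈ s, θ k / P k) {F : ι → ℝ} {G : κ → ι → ℝ}
    (hF : ∀ j, 0 ≤ F j) (hG : ∀ k ∈ s, ∀ j, 0 ≤ G k j)
    (hFG : ∀ j, F j ≤ ∏ k ∈ s, G k j ^ θ k) :
    (∑ j, F j ^ p) ^ (1 / p) ≤ ∏ k ∈ s, ((∑ j, G k j ^ P k) ^ (1 / P k)) ^ θ k := by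
  set w : κ → ℝ := fun k => θ k * p / P k
  have hw : ∀ k ∈ s, 0 ≤ w k := fun k hk => div_nonneg (mul_nonneg (hθ k hk) hp.le) (hP k hk).le
  have hw1 : ∑ k ∈ s, w k = 1 := by
    simp only [w, mul_comm _ p, mul_div_assoc, ← mul_sum, ← hconv]
    field_simp
  have hGP : ∀ k ∈ s, ∀ j, 0 ≤ G k j ^ P k := fun k hk j => Real.rpow_nonneg (hG k hk j) _
  have hSP : ∀ k ∈ s, 0 ≤ ∑ j, G k j ^ P k := fun k hk => sum_nonneg fun j _ => hGP k hk j
  have hpointwise : ∀ j, F j ^ p ≤ ∏ k ∈ s, (G k j ^ P k) ^ w k := fun j =>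
    calc F j ^ p ≤ (∏ k ∈ s, G k j ^ θ k) ^ p := by gcongr; exacts [hF j, hFG j]
      _ = ∏ k ∈ s, (G k j ^ P k) ^ w k := by
        rw [← Real.finsetProd_rpow _ _ fun k hk => Real.rpow_nonneg (hG k hk j) _]
        refine prod_congr rfl fun k hk => ?_
        rw [← Real.rpow_mul (hG k hk j), ← Real.rpow_mul (hG k hk j)]
        congr 1
        simp only [w]; field_simp [(hP k hk).ne']
  calc (∑ j, F j ^ p) ^ (1 / p)
      ≤ (∑ j, ∏ k ∈ s, (G k j ^ P k) ^ w k) ^ (1 / p) := by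
        gcongr with j
        · exact sum_nonneg fun j _ => Real.rpow_nonneg (hF j) _
        · exact hpointwise j
    _ ≤ (∏ k ∈ s, (∑ j, G k j ^ P k) ^ w k) ^ (1 / p) := by
        gcongr
        · exact sum_nonneg fun j _ => prod_nonneg fun k hk => Real.rpow_nonneg (hGP k hk j) _
        · exact Real.sum_prod_rpow_le_prod_sum_rpow s _ hw hw1 hGP
    _ = ∏ k ∈ s, ((∑ j, G k j ^ P k) ^ (1 / P k)) ^ θ k := by
        rw [← Real.finsetProd_rpow _ _ fun k hk => Real.rpow_nonneg (hSP k hk) _]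
        refine prod_congr rfl fun k hk => ?_
        rw [← Real.rpow_mul (hSP k hk), ← Real.rpow_mul (hSP k hk)]
        congr 1
        simp only [w]; field_simp [hp.ne', (hP k hk).ne']

theorem mixedNorm_nonneg {n : ℕ} :
    ∀ {m : ℕ} (p : Fin m → ℝ) (a : (Fin m → Fin n) → ℂ), 0 ≤ mixedNorm n m p a
  | 0, _, _ => norm_nonneg _
  | _ + 1, _, _ =>
    Real.rpow_nonneg (sum_nonneg fun _ _ => Real.rpow_nonneg (mixedNorm_nonneg _ _) _) _

theorem mixedNorm_interpolation_general (m n N : ℕ)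
    (q : Fin m → ℝ) (Q : Fin N → Fin m → ℝ) (θ : Fin N → ℝ)
    (hq : ∀ i, 1 ≤ q i) (hQ : ∀ k i, 1 ≤ Q k i)
    (hθ0 : ∀ k, 0 ≤ θ k) (hθsum : ∑ k, θ k = 1)
    (hconv : ∀ i, 1 / q i = ∑ k, θ k / Q k i)
    (a : (Fin m → Fin n) → ℂ) :
    mixedNorm n m q a ≤ ∏ k, (mixedNorm n m (Q k) a) ^ θ k := by
  induction m with
  | zero =>
    simp only [mixedNorm]
    rw [← Real.rpow_sum_of_nonneg (norm_nonneg _) fun k _ => hθ0 k, hθsum, Real.rpow_one]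
  | succ m ih =>
    exact sum_rpow_one_div_le_prod_of_le_prod_rpow univ (by linarith [hq 0])
      (fun k _ => by linarith [hQ k 0]) (fun k _ => hθ0 k) (hconv 0)
      (fun _ => mixedNorm_nonneg _ _) (fun _ _ _ => mixedNorm_nonneg _ _)
      fun j => ih _ _ (fun i => hq i.succ) (fun k i => hQ k i.succ) (fun i => hconv i.succ) _

/-- **Interpolation procedure** (Albuquerque–Bayart–Pellegrino–Seoane):
if `(1/q_1,…,1/q_m)` lies in the convex hull of the points
`(1/q_1(k),…,1/q_m(k))`, `k = 1,…,N`, with coefficients `θ_k`, then for every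
scalar matrix `a` one has `‖a‖_q ≤ ∏_k ‖a‖_{q(k)}^{θ_k}` in mixed norms. -/
theorem mixedNorm_interpolation (m n N : ℕ) (hm : 0 < m) (hn : 0 < n) (hN : 0 < N)
    (q : Fin m → ℝ) (Q : Fin N → Fin m → ℝ) (θ : Fin N → ℝ)
    (hq : ∀ i, 1 ≤ q i) (hQ : ∀ k i, 1 ≤ Q k i)
    (hθ0 : ∀ k, 0 ≤ θ k) (hθ1 : ∀ k, θ k ≤ 1) (hθsum : ∑ k, θ k = 1)
    (hconv : ∀ i, 1 / q i = ∑ k, θ k / Q k i)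
    (a : (Fin m → Fin n) → ℂ) :
    mixedNorm n m q a ≤ ∏ k, (mixedNorm n m (Q k) a) ^ θ k :=
  mixedNorm_interpolation_general m n N q Q θ hq hQ hθ0 hθsum hconv a
end

section
/- For each n ≥ 2 and every (x_1,…,x_n) ∈ [1,q)^n, the functions f_n^k satisfy ∑_{k=1}^n f_n^k(x_1,…,x_n) = 1. -/
open Finset

/-- `ω(x,y) = (q²(x+y) − 2qxy)/(q² − xy)`. -/
noncomputable def omegaFn (q x y : ℝ) : ℝ := (q ^ 2 * (x + y) - 2 * q * x * y) / (q ^ 2 - x * y)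

/-- `f(x,y) = (q²x − qxy)/(q²(x+y) − 2qxy)`. -/
noncomputable def fFn (q x y : ℝ) : ℝ := (q ^ 2 * x - q * x * y) / (q ^ 2 * (x + y) - 2 * q * x * y)

/-- The iterated functions `ω_n`: `ω_1(x) = x`,
`ω_n(x_1,…,x_n) = ω(x_n, ω_{n−1}(x_1,…,x_{n−1}))` (so that
`ω_2(x_1,x_2) = ω(x_1,x_2)` by symmetry of `ω`). -/
noncomputable def omegaIter (q : ℝ) : (n : ℕ) → (Fin n → ℝ) → ℝ
  | 0, _ => 0
  | 1, x => x 0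
  | n + 2, x =>
      omegaFn q (x (Fin.last (n + 1))) (omegaIter q (n + 1) (fun i => x i.castSucc))

/-- The iterated functions `f_n = (f_n^1,…,f_n^n)`: `f_1 ≡ 1`,
`f_n^k(x_1,…,x_n) = f_{n−1}^k(x_1,…,x_{n−1})·f(ω_{n−1}(x_1,…,x_{n−1}),x_n)`
for `k ≤ n−1`, and `f_n^n(x_1,…,x_n) = f(x_n, ω_{n−1}(x_1,…,x_{n−1}))`
(so that `f_2(x_1,x_2) = (f(x_1,x_2), f(x_2,x_1))`). -/
noncomputable def fIter (q : ℝ) : (n : ℕ) → (Fin n → ℝ) → Fin n → ℝ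
  | 0, _ => fun k => 1
  | 1, _ => fun k => 1
  | n + 2, x => fun k =>
      if h : k = Fin.last (n + 1) then
        fFn q (x (Fin.last (n + 1))) (omegaIter q (n + 1) (fun i => x i.castSucc))
      else
        fIter q (n + 1) (fun i => x i.castSucc) (k.castPred h) *
          fFn q (omegaIter q (n + 1) (fun i => x i.castSucc)) (x (Fin.last (n + 1)))

/-! The pair `(f(x,y), f(y,x))` sums to one, since both share the denominator
`q²(x+y) − 2qxy = q(x(q−y) + y(q−x))`, which is positive on `(0,q)²`. The interval `(0,q)` is
stable under `ω` because `q − ω(x,y) = q(q−x)(q−y)/(q² − xy)`, so every `ω_n` stays in `(0,q)`.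
Splitting off the last coordinate, `∑_k f_{n+1}^k = (∑_k f_n^k)·f(ω_n, x_{n+1}) + f(x_{n+1}, ω_n)`,
and induction on `n` finishes the proof. -/

section Interval

variable {q a b : ℝ}

lemma fFn_denom_pos (ha : a ∈ Set.Ioo 0 q) (hb : b ∈ Set.Ioo 0 q) :
    0 < q ^ 2 * (a + b) - 2 * q * a * b := by
  obtain ⟨ha₀, haq⟩ := ha
  obtain ⟨hb₀, hbq⟩ := hb
  have hq : 0 < q := ha₀.trans haq
  have hfactor : q ^ 2 * (a + b) - 2 * q * a * b = q * (a * (q - b) + b * (q - a)) := by ring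
  rw [hfactor]
  have := sub_pos.2 haq
  have := sub_pos.2 hbq
  positivity

lemma omegaFn_mem_Ioo (ha : a ∈ Set.Ioo 0 q) (hb : b ∈ Set.Ioo 0 q) :
    omegaFn q a b ∈ Set.Ioo 0 q := by
  have hnum := fFn_denom_pos ha hb
  obtain ⟨ha₀, haq⟩ := ha
  obtain ⟨hb₀, hbq⟩ := hb
  have hden : 0 < q ^ 2 - a * b := by nlinarith
  refine ⟨div_pos hnum hden, ?_⟩
  rw [omegaFn, div_lt_iff₀ hden, ← sub_pos]
  have hfactor : q * (q ^ 2 - a * b) - (q ^ 2 * (a + b) - 2 * q * a * b) =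
      q * (q - a) * (q - b) := by ring
  rw [hfactor]
  have hq : 0 < q := ha₀.trans haq
  have := sub_pos.2 haq
  have := sub_pos.2 hbq
  positivity

lemma fFn_add_fFn_swap (ha : a ∈ Set.Ioo 0 q) (hb : b ∈ Set.Ioo 0 q) :
    fFn q a b + fFn q b a = 1 := by
  have hden := (fFn_denom_pos ha hb).ne'
  have hswap : q ^ 2 * (b + a) - 2 * q * b * a = q ^ 2 * (a + b) - 2 * q * a * b := by ring
  rw [fFn, fFn, hswap, ← add_div, div_eq_one_iff_eq hden]
  ring

end Interval

lemma omegaIter_mem_Ioo {q : ℝ} : ∀ {m : ℕ} {x : Fin (m + 1) → ℝ},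
    (∀ i, x i ∈ Set.Ioo 0 q) → omegaIter q (m + 1) x ∈ Set.Ioo 0 q
  | 0, _, hx => hx 0
  | _ + 1, _, hx => omegaFn_mem_Ioo (hx _) (omegaIter_mem_Ioo fun _ => hx _)

lemma sum_fIter_succ (q : ℝ) (m : ℕ) (x : Fin (m + 2) → ℝ) :
    ∑ k, fIter q (m + 2) x k =
      (∑ k, fIter q (m + 1) (fun i => x i.castSucc) k) *
          fFn q (omegaIter q (m + 1) (fun i => x i.castSucc)) (x (Fin.last (m + 1))) +
        fFn q (x (Fin.last (m + 1))) (omegaIter q (m + 1) (fun i => x i.castSucc)) := by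
  rw [Fin.sum_univ_castSucc, Finset.sum_mul]
  congr 1
  · refine Finset.sum_congr rfl fun k _ => ?_
    simp [fIter, (Fin.castSucc_lt_last k).ne]
  · simp [fIter]

lemma sum_fIter_eq_one_of_mem_Ioo {q : ℝ} : ∀ {m : ℕ} {x : Fin (m + 1) → ℝ},
    (∀ i, x i ∈ Set.Ioo 0 q) → ∑ k, fIter q (m + 1) x k = 1
  | 0, _, _ => by simp [fIter]
  | _ + 1, _, hx => by
    rw [sum_fIter_succ, sum_fIter_eq_one_of_mem_Ioo fun _ => hx _, one_mul]
    exact fFn_add_fFn_swap (omegaIter_mem_Ioo fun _ => hx _) (hx _)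

theorem sum_fIter_eq_one_general (q : ℝ) (n : ℕ) (hn : 2 ≤ n)
    (x : Fin n → ℝ) (hx : ∀ i, 1 ≤ x i ∧ x i < q) :
    ∑ k, fIter q n x k = 1 := by
  obtain ⟨m, rfl⟩ : ∃ m, n = m + 1 := ⟨n - 1, by omega⟩
  exact sum_fIter_eq_one_of_mem_Ioo fun i => ⟨one_pos.trans_le (hx i).1, (hx i).2⟩

/-- For every `n ≥ 2` and `(x_1,…,x_n) ∈ [1,q)^n`, the coordinates of `f_n`
sum to one: `∑_{k=1}^n f_n^k(x_1,…,x_n) = 1`. -/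
theorem sum_fIter_eq_one (q : ℝ) (hq : 2 ≤ q) (n : ℕ) (hn : 2 ≤ n)
    (x : Fin n → ℝ) (hx : ∀ i, 1 ≤ x i ∧ x i < q) :
    ∑ k, fIter q n x k = 1 :=
  sum_fIter_eq_one_general q n hn x hx
end

section
/- For q ≥ 2 and r_1, …, r_n ∈ [1,q), the iterated function ω_n satisfies the closed formula ω_n(r_1,…,r_n) = qR/(1+R), and f_n^k(r_1,…,r_n) = r_k/(R(q − r_k)) for each k = 1,…,n, where R := ∑_{k=1}^n r_k/(q − r_k). -/
open Finset

lemma omega_eq (q x y : ℝ) (hq0 : 0 < q) (hx0 : 0 < x) (hxq : x < q) (hy0 : 0 < y) (hyq : y < q) :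
    omegaFn q x y = q * (x/(q-x) + y/(q-y)) / (1 + (x/(q-x) + y/(q-y))) := by
  have hx : (0:ℝ) < q - x := by linarith
  have hy : (0:ℝ) < q - y := by linarith
  have hden : 0 < x/(q-x) + y/(q-y) := by positivity
  have hden2 : (0:ℝ) < q^2 - x*y := by nlinarith
  have h1 : 0 < 1 + (x/(q-x) + y/(q-y)) := by linarith
  unfold omegaFn
  rw [div_eq_div_iff hden2.ne' h1.ne']
  field_simp
  ring

lemma fFn_eq (q x y : ℝ) (hq0 : 0 < q) (hx0 : 0 < x) (hxq : x < q) (hy0 : 0 < y) (hyq : y < q) :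
    fFn q x y = (x/(q-x)) / (x/(q-x) + y/(q-y)) := by
  have hx : (0:ℝ) < q - x := by linarith
  have hy : (0:ℝ) < q - y := by linarith
  have hden : 0 < x/(q-x) + y/(q-y) := by positivity
  have hden2 : (0:ℝ) < q^2*(x+y) - 2*q*x*y := by nlinarith [mul_pos hx0 hy, mul_pos hy0 hx]
  unfold fFn
  rw [div_eq_div_iff hden2.ne' hden.ne']
  field_simp
  ring

lemma main_aux (q : ℝ) (hq : 2 ≤ q) : ∀ n, 1 ≤ n → ∀ r : Fin n → ℝ, (∀ i, 1 ≤ r i ∧ r i < q) →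
    omegaIter q n r = q * (∑ k, r k / (q - r k)) / (1 + ∑ k, r k / (q - r k)) ∧
      ∀ k, fIter q n r k = r k / ((∑ j, r j / (q - r j)) * (q - r k)) := by
  intro n
  induction n with
  | zero => omega
  | succ n ih =>
    intro _ r hr
    have hq0 : (0:ℝ) < q := by linarith
    have hpos : ∀ i : Fin (n+1), 0 < r i / (q - r i) := fun i => by
      have h := hr i; exact div_pos (by linarith [h.1]) (by linarith [h.2])
    rcases Nat.eq_zero_or_pos n with rfl | hn1
    · -- base case n+1 = 1
      have h0 := hr 0
      have hq1 : (0:ℝ) < q - r 0 := by linarith [h0.2]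
      have hR : (∑ k : Fin 1, r k / (q - r k)) = r 0 / (q - r 0) := by
        simp [Fin.sum_univ_one]
      have h1R : (0:ℝ) < 1 + r 0 / (q - r 0) := by linarith [hpos 0]
      constructor
      · show r 0 = _
        rw [hR, eq_div_iff h1R.ne']
        field_simp
        ring
      · intro k
        have hk : k = 0 := Fin.ext (by omega)
        subst hk
        show (1:ℝ) = _
        rw [hR, eq_comm, div_eq_one_iff_eq (mul_ne_zero (hpos 0).ne' hq1.ne')]
        field_simp
    · -- inductive step: n ≥ 1
      obtain ⟨m, rfl⟩ : ∃ m, n = m + 1 := ⟨n - 1, by omega⟩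
      set r' : Fin (m+1) → ℝ := fun i => r i.castSucc with hr'
      have hr'prop : ∀ i, 1 ≤ r' i ∧ r' i < q := fun i => hr _
      obtain ⟨ihω, ihf⟩ := ih (by omega) r' hr'prop
      set R' := ∑ j : Fin (m+1), r' j / (q - r' j) with hR'def
      have hR'pos : 0 < R' := Finset.sum_pos (fun i _ => by
        have h := hr'prop i; exact div_pos (by linarith [h.1]) (by linarith [h.2])) ⟨0, mem_univ 0⟩
      set x := r (Fin.last (m+1)) with hxdef
      have hxb := hr (Fin.last (m+1))
      have hx0 : 0 < x := by linarith [hxb.1]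
      have hxq : x < q := hxb.2
      have hqx : 0 < q - x := by linarith
      set w := omegaIter q (m+1) r' with hwdef
      have h1R : (0:ℝ) < 1 + R' := by linarith
      have hw0 : 0 < w := by
        rw [ihω]; exact div_pos (mul_pos hq0 hR'pos) h1R
      have hwq : w < q := by
        rw [ihω, div_lt_iff₀ (by positivity)]
        nlinarith [hR'pos]
      have hqw : (0:ℝ) < q - w := by linarith
      have hwe : w * (1 + R') = q * R' := by
        rw [ihω]; field_simp
      have hwR : w / (q - w) = R' := by
        rw [div_eq_iff hqw.ne']
        linear_combination hwe
      have hsum : (∑ k : Fin (m+2), r k / (q - r k)) = R' + x / (q - x) := by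
        rw [Fin.sum_univ_castSucc]
      have hRpos : 0 < R' + x / (q - x) := by
        have := div_pos hx0 hqx; linarith
      have hωstep : omegaIter q (m+2) r = omegaFn q x w := rfl
      constructor
      · rw [hωstep, omega_eq q x w hq0 hx0 hxq hw0 hwq, hwR, hsum]
        ring_nf
      · intro k
        have hfstep : fIter q (m+2) r k =
            if h : k = Fin.last (m+1) then fFn q x w
            else fIter q (m+1) r' (k.castPred h) * fFn q w x := rfl
        rw [hfstep]
        by_cases h : k = Fin.last (m+1)
        · subst h
          rw [dif_pos rfl, fFn_eq q x w hq0 hx0 hxq hw0 hwq, hwR, hsum, div_div]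
          congr 1
          ring
        · rw [dif_neg h, ihf, fFn_eq q w x hq0 hw0 hwq hx0 hxq, hwR, hsum]
          have hk' : r' (k.castPred h) = r k := by
            simp [hr', Fin.castSucc_castPred]
          rw [hk']
          have hkb := hr k
          have hqk : (0:ℝ) < q - r k := by linarith [hkb.2]
          rw [div_mul_div_comm, div_eq_div_iff (mul_pos (mul_pos hR'pos hqk) hRpos).ne'
            (mul_pos hRpos hqk).ne']
          ring


/-- **Closed formula for the iterated exponents** (Popa–Schwarting):
for `q ≥ 2` and `r_1,…,r_n ∈ [1,q)` with `n ≥ 2`, setting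
`R = ∑_k r_k/(q−r_k)`, one has `ω_n(r_1,…,r_n) = qR/(1+R)` and
`f_n^k(r_1,…,r_n) = r_k/(R(q−r_k))` for each `k`. -/
theorem omegaIter_fIter_closed_formula (q : ℝ) (hq : 2 ≤ q) (n : ℕ) (hn : 2 ≤ n)
    (r : Fin n → ℝ) (hr : ∀ i, 1 ≤ r i ∧ r i < q) :
    omegaIter q n r = q * (∑ k, r k / (q - r k)) / (1 + ∑ k, r k / (q - r k)) ∧
      ∀ k, fIter q n r k = r k / ((∑ j, r j / (q - r j)) * (q - r k)) := by
  exact main_aux q hq n (by omega) r hr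
end

section
/- For every t ∈ [1,2) there is a constant κ_{t,ℂ} > 0 such that for all m ≥ 1, ∏_{j=2}^m Γ(2 − (2−t)/(2+t(j−2)))^{−(2+t(j−2))/(2t(j−1))} ≤ κ_{t,ℂ} · m^{((γ−1)(t−2))/(2t)}, where γ is the Euler–Mascheroni constant. -/
/-!
Log-convexity of `Γ` puts `log Γ` above its tangent line at `2`, where `Γ 2 = 1` and
`Γ' 2 = 1 - γ`; hence `Γ (2 - u) ≥ exp ((γ - 1) u)`. In the `j`-th factor the product of the shift
`u` and the exponent is `(2 - t) / (2t (j - 1))`, so that factor is at most `exp (ε / (j - 1))` with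
`ε = (γ - 1)(t - 2) / (2t) ≥ 0`, and the whole product is at most
`exp (ε H_{m-1}) ≤ exp (ε (1 + log m)) = e^ε m^ε`.
-/

open Finset Real

theorem ConvexOn.add_mul_sub_le_of_hasDerivAt {S : Set ℝ} {f : ℝ → ℝ} {f' x y : ℝ}
    (hf : ConvexOn ℝ S f) (hx : x ∈ S) (hy : y ∈ S) (hf' : HasDerivAt f f' x) :
    f x + f' * (y - x) ≤ f y := by
  rcases lt_trichotomy x y with hxy | rfl | hyx
  · have := hf.le_slope_of_hasDerivAt hx hy hxy hf'
    rw [slope_def_field, le_div_iff₀ (sub_pos.2 hxy)] at this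
    linarith
  · simp
  · have := hf.slope_le_of_hasDerivAt hy hx hyx hf'
    rw [slope_def_field, div_le_iff₀ (sub_pos.2 hyx)] at this
    linarith

namespace Real

theorem hasDerivAt_Gamma_two : HasDerivAt Gamma (1 - eulerMascheroniConstant) 2 := by
  convert hasDerivAt_Gamma_nat 1 using 1 <;> norm_num
  ring

theorem one_sub_eulerMascheroniConstant_mul_le_log_Gamma {x : ℝ} (hx : 0 < x) :
    (1 - eulerMascheroniConstant) * (x - 2) ≤ log (Gamma x) := by
  have hlog : HasDerivAt (fun y ↦ log (Gamma y)) (1 - eulerMascheroniConstant) 2 := by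
    simpa [Gamma_two] using hasDerivAt_Gamma_two.log (by norm_num [Gamma_two])
  simpa [Gamma_two] using
    convexOn_log_Gamma.add_mul_sub_le_of_hasDerivAt (by norm_num) (Set.mem_Ioi.2 hx) hlog

theorem Gamma_two_sub_rpow_neg_le {u e : ℝ} (hu : u < 2) (he : 0 ≤ e) :
    Gamma (2 - u) ^ (-e) ≤ exp ((1 - eulerMascheroniConstant) * (u * e)) := by
  have hlog := one_sub_eulerMascheroniConstant_mul_le_log_Gamma (x := 2 - u) (by linarith)
  rw [rpow_def_of_pos (Gamma_pos_of_pos (by linarith)), exp_le_exp]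
  nlinarith

end Real

theorem sum_Icc_two_one_div_sub_one_eq_harmonic (m : ℕ) :
    ∑ j ∈ Icc 2 m, 1 / ((j : ℝ) - 1) = harmonic (m - 1) := by
  induction m with
  | zero => simp
  | succ n ih =>
    rcases Nat.eq_zero_or_pos n with rfl | hn
    · simp
    rw [sum_Icc_succ_top (by omega), ih, show n + 1 - 1 = (n - 1) + 1 by omega, harmonic_succ]
    push_cast [Nat.sub_add_cancel hn]
    ring

theorem sum_Icc_two_one_div_sub_one_le_one_add_log (m : ℕ) :
    ∑ j ∈ Icc 2 m, 1 / ((j : ℝ) - 1) ≤ 1 + log m := by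
  rcases m with _ | _ | n
  · simp
  · simp
  rw [sum_Icc_two_one_div_sub_one_eq_harmonic]
  refine (harmonic_le_one_add_log _).trans (add_le_add_right (log_le_log ?_ ?_) 1) <;>
    simp [Nat.cast_add_one_pos]

theorem prod_Icc_two_exp_div_sub_one_le {ε : ℝ} (hε : 0 ≤ ε) {m : ℕ} (hm : 1 ≤ m) :
    ∏ j ∈ Icc 2 m, exp (ε / ((j : ℝ) - 1)) ≤ exp ε * (m : ℝ) ^ ε := by
  have hsum : ∑ j ∈ Icc 2 m, ε / ((j : ℝ) - 1) = ε * ∑ j ∈ Icc 2 m, 1 / ((j : ℝ) - 1) := by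
    simp only [mul_sum, mul_one_div]
  rw [← exp_sum, hsum, rpow_def_of_pos (by exact_mod_cast hm), ← exp_add, exp_le_exp]
  nlinarith [sum_Icc_two_one_div_sub_one_le_one_add_log m]

section BohnenblustHilleFactor

variable {t x : ℝ}

theorem div_two_add_mul_sub_two_lt_two (ht : 0 < t) (hx : 2 ≤ x) :
    (2 - t) / (2 + t * (x - 2)) < 2 := by
  rw [div_lt_iff₀ (by nlinarith)]
  nlinarith

theorem Gamma_rpow_le_exp_div_sub_one (ht : 0 < t) (hx : 2 ≤ x) :
    Gamma (2 - (2 - t) / (2 + t * (x - 2))) ^ (-((2 + t * (x - 2)) / (2 * t * (x - 1)))) ≤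
      exp ((eulerMascheroniConstant - 1) * (t - 2) / (2 * t) / (x - 1)) := by
  have hD : 0 < 2 + t * (x - 2) := by nlinarith
  refine (Gamma_two_sub_rpow_neg_le (div_two_add_mul_sub_two_lt_two ht hx)
    (div_nonneg hD.le (by nlinarith))).trans_eq ?_
  have : x - 1 ≠ 0 := by linarith
  congr 1
  field_simp
  ring

end BohnenblustHilleFactor

/-- **Asymptotic growth of the complex Bohnenblust–Hille constants**: for every
`t ∈ [1,2)` there is `κ > 0` such that for all `m ≥ 1`,
`∏_{j=2}^m Γ(2 − (2−t)/(2+t(j−2)))^{−(2+t(j−2))/(2t(j−1))}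
  ≤ κ · m^{(γ−1)(t−2)/(2t)}`, where `γ` is the Euler–Mascheroni constant. -/
theorem bohnenblust_hille_constant_asymptotic (t : ℝ) (ht1 : 1 ≤ t) (ht2 : t < 2) :
    ∃ κ : ℝ, 0 < κ ∧ ∀ m : ℕ, 1 ≤ m →
      ∏ j ∈ Finset.Icc 2 m,
          Real.Gamma (2 - (2 - t) / (2 + t * ((j : ℝ) - 2))) ^
            (-((2 + t * ((j : ℝ) - 2)) / (2 * t * ((j : ℝ) - 1)))) ≤
        κ * (m : ℝ) ^ ((Real.eulerMascheroniConstant - 1) * (t - 2) / (2 * t)) := by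
  have ht : 0 < t := by linarith
  set ε := (eulerMascheroniConstant - 1) * (t - 2) / (2 * t)
  have hε : 0 ≤ ε := div_nonneg (mul_nonneg_of_nonpos_of_nonpos
    (by linarith [eulerMascheroniConstant_lt_two_thirds]) (by linarith)) (by linarith)
  refine ⟨exp ε, exp_pos ε, fun m hm ↦ ?_⟩
  have h2 : ∀ j ∈ Icc 2 m, (2 : ℝ) ≤ j := fun j hj ↦ by exact_mod_cast (mem_Icc.1 hj).1
  calc _ ≤ ∏ j ∈ Icc 2 m, exp (ε / ((j : ℝ) - 1)) := prod_le_prod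
          (fun j hj ↦ rpow_nonneg (Gamma_pos_of_pos
            (by linarith [div_two_add_mul_sub_two_lt_two ht (h2 j hj)])).le _)
          (fun j hj ↦ Gamma_rpow_le_exp_div_sub_one ht (h2 j hj))
    _ ≤ exp ε * (m : ℝ) ^ ε := prod_Icc_two_exp_div_sub_one_le hε hm
end
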